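/- For every nonnegative integer n, all real α, β, and every real x, (1+x) · (d/dx)P_n^{(α,β)}(x) + β · P_n^{(α,β)}(x) = (n+β) · P_n^{(α+1,β-1)}(x). -/

import Mathlib

open MeasureTheory Finset

/-- Rising factorial (Pochhammer symbol) `(a)_k = a(a+1)⋯(a+k-1)`. -/
noncomputable def poch (a : ℝ) (k : ℕ) : ℝ := ∏ i ∈ Finset.range k, (a + i)

/-- Jacobi polynomial
`P_n^{(α,β)}(x) = Σ_{k=0}^n ((α+k+1)_{n-k}/(n-k)!) ((n+α+β+1)_k/k!) ((x-1)/2)^k`. -/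
noncomputable def jacobiP (n : ℕ) (α β : ℝ) (x : ℝ) : ℝ :=
  ∑ k ∈ Finset.range (n + 1),
    poch (α + k + 1) (n - k) / ((n - k).factorial : ℝ) *
      (poch ((n : ℝ) + α + β + 1) k / (k.factorial : ℝ)) * ((x - 1) / 2) ^ k

/-
In the variable `y = (x - 1)/2` we have `1 + x = 2(1 + y)`, so for `P = Σ c_k y^k` the left-hand side
is `Σ ((k + 1) c_{k+1} + (k + β) c_k) y^k`. Comparing with the coefficients of `P_n^{(α+1,β-1)}`
reduces the identity to a contiguous relation between Pochhammer symbols in each degree `k < n`,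
while the top coefficients of both polynomials agree.
-/

lemma poch_zero (a : ℝ) : poch a 0 = 1 := by simp [poch]

lemma poch_succ_right (a : ℝ) (k : ℕ) : poch a (k + 1) = poch a k * (a + k) := by
  simp [poch, prod_range_succ]

lemma poch_succ_left (a : ℝ) (k : ℕ) : poch a (k + 1) = a * poch (a + 1) k := by
  simp only [poch, prod_range_succ', Nat.cast_zero, add_zero, Nat.cast_succ]
  rw [mul_comm]
  congr 1
  exact prod_congr rfl fun i _ => by ring

noncomputable def jacobiCoeff (n : ℕ) (α β : ℝ) (k : ℕ) : ℝ :=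
  poch (α + k + 1) (n - k) / ((n - k).factorial : ℝ) *
    (poch ((n : ℝ) + α + β + 1) k / (k.factorial : ℝ))

lemma jacobiP_eq_sum_jacobiCoeff (n : ℕ) (α β x : ℝ) :
    jacobiP n α β x = ∑ k ∈ range (n + 1), jacobiCoeff n α β k * ((x - 1) / 2) ^ k := rfl

lemma jacobiCoeff_add_one_sub_one_self (n : ℕ) (α β : ℝ) :
    jacobiCoeff n (α + 1) (β - 1) n = jacobiCoeff n α β n := by
  simp only [jacobiCoeff, Nat.sub_self, poch_zero]
  ring_nf

lemma jacobiCoeff_contiguous {n k : ℕ} (hk : k < n) (α β : ℝ) :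
    ((k : ℝ) + 1) * jacobiCoeff n α β (k + 1) + ((k : ℝ) + β) * jacobiCoeff n α β k =
      ((n : ℝ) + β) * jacobiCoeff n (α + 1) (β - 1) k := by
  obtain ⟨m, rfl⟩ : ∃ m, n = k + 1 + m := ⟨n - (k + 1), by omega⟩
  have hsub : k + 1 + m - k = m + 1 := by omega
  have harg : α + ((k + 1 : ℕ) : ℝ) + 1 = α + k + 1 + 1 := by push_cast; ring
  have harg' : α + 1 + k + 1 = α + k + 1 + 1 := by ring
  have hpar : ((k + 1 + m : ℕ) : ℝ) + (α + 1) + (β - 1) + 1 = (k + 1 + m : ℕ) + α + β + 1 := by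
    ring
  simp only [jacobiCoeff, hsub, Nat.add_sub_cancel_left]
  rw [harg, harg', hpar, poch_succ_left (α + k + 1) m, poch_succ_right _ k,
    poch_succ_right (α + k + 1 + 1) m, Nat.factorial_succ, Nat.factorial_succ]
  push_cast
  field_simp
  ring

lemma hasDerivAt_sum_mul_half_sub_one_pow (c : ℕ → ℝ) (N : ℕ) (x : ℝ) :
    HasDerivAt (fun t => ∑ k ∈ range N, c k * ((t - 1) / 2) ^ k)
      (∑ k ∈ range N, c k * (k * ((x - 1) / 2) ^ (k - 1) * (1 / 2))) x :=
  HasDerivAt.fun_sum fun k _ =>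
    ((((hasDerivAt_id x).sub_const 1).div_const 2).pow k).const_mul (c k)

lemma one_add_mul_deriv_add_mul_sum (c : ℕ → ℝ) (N : ℕ) (β x : ℝ) :
    (1 + x) * deriv (fun t => ∑ k ∈ range (N + 1), c k * ((t - 1) / 2) ^ k) x +
        β * ∑ k ∈ range (N + 1), c k * ((x - 1) / 2) ^ k =
      ∑ k ∈ range N, (((k : ℝ) + 1) * c (k + 1) + ((k : ℝ) + β) * c k) * ((x - 1) / 2) ^ k +
        ((N : ℝ) + β) * c N * ((x - 1) / 2) ^ N := by
  rw [(hasDerivAt_sum_mul_half_sub_one_pow c (N + 1) x).deriv]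
  set y := (x - 1) / 2
  have hshift : ∑ k ∈ range (N + 1), c k * k * y ^ (k - 1) =
      ∑ k ∈ range N, ((k : ℝ) + 1) * c (k + 1) * y ^ k := by
    rw [sum_range_succ']
    simp only [Nat.cast_zero, mul_zero, zero_mul, add_zero, Nat.add_sub_cancel, Nat.cast_succ]
    exact sum_congr rfl fun k _ => by ring
  have hlower : ∀ k : ℕ, (k : ℝ) * y ^ (k - 1) * y = k * y ^ k := by
    rintro (_ | k) <;> simp [pow_succ, mul_assoc]
  calc (1 + x) * ∑ k ∈ range (N + 1), c k * (k * y ^ (k - 1) * (1 / 2)) +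
        β * ∑ k ∈ range (N + 1), c k * y ^ k
      = ∑ k ∈ range (N + 1), c k * k * y ^ (k - 1) +
          ∑ k ∈ range (N + 1), ((k : ℝ) + β) * c k * y ^ k := by
        rw [show 1 + x = 2 * (1 + y) by simp only [y]; ring, mul_sum, mul_sum,
          ← sum_add_distrib, ← sum_add_distrib]
        refine sum_congr rfl fun k _ => ?_
        linear_combination c k * hlower k
    _ = _ := by
        rw [hshift, sum_range_succ, ← add_assoc, ← sum_add_distrib]
        simp only [add_mul]

theorem jacobi_diff_lower_beta (n : ℕ) (α β : ℝ) (x : ℝ) :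
    (1 + x) * deriv (fun t => jacobiP n α β t) x + β * jacobiP n α β x =
      ((n : ℝ) + β) * jacobiP n (α + 1) (β - 1) x := by
  simp only [jacobiP_eq_sum_jacobiCoeff]
  rw [one_add_mul_deriv_add_mul_sum, mul_sum, sum_range_succ,
    jacobiCoeff_add_one_sub_one_self]
  congr 1
  · exact sum_congr rfl fun k hk => by
      rw [jacobiCoeff_contiguous (mem_range.mp hk), mul_assoc]
  · ring
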